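/- For every 1 ≤ i ≤ n−2, the element ℋ_{i+1} of y_ℏ(gl(n)) commutes with the quantum minor t^{1,…,i}_{1,…,i}[(i−1)ℏ/2] in y_ℏ(gl(n))[[w]], that is, [ℋ_{i+1}, t^{1,…,i}_{1,…,i}[(i−1)ℏ/2]] = 0. -/

import Mathlib

open scoped BigOperators

noncomputable section

/-- Kronecker delta as a complex scalar. -/
def kd {n : ℕ} (i j : Fin n) : ℂ := if i = j then 1 else 0

/-- The free associative unital `ℂ`-algebra on generators `T^{(r)}_{i,j}`,
`r ∈ ℕ`, `1 ≤ i, j ≤ n` (indices realized as `Fin n`). -/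
abbrev FAgl (n : ℕ) := FreeAlgebra ℂ (ℕ × Fin n × Fin n)

/-- The generator `T^{(r)}_{i,j}` of the free algebra. -/
def Tf (n : ℕ) (r : ℕ) (i j : Fin n) : FAgl n := FreeAlgebra.ι ℂ (r, i, j)

/-- The defining relations of `y_ℏ(gl(n))`:  `T^{(0)}_{i,j} = δ_{i,j}`;
`[T^{(1)}_{i,j}, T^{(r)}_{k,l}] = δ_{j,k}T^{(r)}_{i,l} − δ_{i,l}T^{(r)}_{k,j}`;
`[T^{(2)}_{i,i}, T^{(2)}_{j,j}] = −ℏ(T^{(1)}_{j,i}T^{(2)}_{i,j} − T^{(2)}_{j,i}T^{(1)}_{i,j})`;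
`[T^{(2)}_{i,i}, T^{(r)}_{k,l}] = δ_{i,k}T^{(r+1)}_{i,l} − δ_{i,l}T^{(r+1)}_{k,i}
  − ℏ(T^{(1)}_{k,i}T^{(r)}_{i,l} − T^{(r)}_{k,i}T^{(1)}_{i,l})`. -/
inductive glRel (n : ℕ) (ℏ : ℂ) : FAgl n → FAgl n → Prop
  | T0 (i j : Fin n) :
      glRel n ℏ (Tf n 0 i j) (algebraMap ℂ (FAgl n) (kd i j))
  | R1 (r : ℕ) (i j k l : Fin n) :
      glRel n ℏ ⁅Tf n 1 i j, Tf n r k l⁆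
        (kd j k • Tf n r i l - kd i l • Tf n r k j)
  | R2 (i j : Fin n) :
      glRel n ℏ ⁅Tf n 2 i i, Tf n 2 j j⁆
        (-(ℏ • (Tf n 1 j i * Tf n 2 i j - Tf n 2 j i * Tf n 1 i j)))
  | R3 (r : ℕ) (i k l : Fin n) :
      glRel n ℏ ⁅Tf n 2 i i, Tf n r k l⁆
        (kd i k • Tf n (r + 1) i l - kd i l • Tf n (r + 1) k i
          - ℏ • (Tf n 1 k i * Tf n r i l - Tf n r k i * Tf n 1 i l))

/-- The algebra `y_ℏ(gl(n))`: the quotient of the free algebra by the two-sided ideal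
generated by the differences of the two sides of the relations `glRel`. -/
abbrev yGL (n : ℕ) (ℏ : ℂ) := RingQuot (glRel n ℏ)

/-- The image of `T^{(r)}_{i,j}` in `y_ℏ(gl(n))`. -/
def T (n : ℕ) (ℏ : ℂ) (r : ℕ) (i j : Fin n) : yGL n ℏ :=
  RingQuot.mkAlgHom ℂ (glRel n ℏ) (Tf n r i j)

/-- The element `ℋ_i` of `y_ℏ(gl(n))` for `1 ≤ i ≤ n−1`; here the paper's index `i`
corresponds to the 0-based index `a = i − 1` (so `a + 1 < n`), and
`ℋ_i = T^{(2)}_{i,i} − T^{(2)}_{i+1,i+1} − ((i−1)/2)ℏ(T^{(1)}_{i,i} − T^{(1)}_{i+1,i+1})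
 + ℏ∑_{u=1}^{i−1} T^{(1)}_{i,u}T^{(1)}_{u,i} − ℏ∑_{u=1}^{i} T^{(1)}_{i+1,u}T^{(1)}_{u,i+1}
 + (ℏ/2)((T^{(1)}_{i,i})² − (T^{(1)}_{i+1,i+1})²)`. -/
def HH (n : ℕ) (ℏ : ℂ) (a : ℕ) (h : a + 1 < n) : yGL n ℏ :=
  T n ℏ 2 ⟨a, by omega⟩ ⟨a, by omega⟩ - T n ℏ 2 ⟨a + 1, h⟩ ⟨a + 1, h⟩
    - (((a : ℂ) / 2) * ℏ) • (T n ℏ 1 ⟨a, by omega⟩ ⟨a, by omega⟩ - T n ℏ 1 ⟨a + 1, h⟩ ⟨a + 1, h⟩)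
    + ℏ • (∑ u : Fin a,
        T n ℏ 1 ⟨a, by omega⟩ ⟨u.val, by have := u.isLt; omega⟩ *
          T n ℏ 1 ⟨u.val, by have := u.isLt; omega⟩ ⟨a, by omega⟩)
    - ℏ • (∑ u : Fin (a + 1),
        T n ℏ 1 ⟨a + 1, h⟩ ⟨u.val, by have := u.isLt; omega⟩ *
          T n ℏ 1 ⟨u.val, by have := u.isLt; omega⟩ ⟨a + 1, h⟩)
    + (ℏ / 2) • ((T n ℏ 1 ⟨a, by omega⟩ ⟨a, by omega⟩) ^ 2
        - (T n ℏ 1 ⟨a + 1, h⟩ ⟨a + 1, h⟩) ^ 2)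


/-- The series `t_{i,j}[a] ∈ y_ℏ(gl(n))[[w]]`: the expansion in `w = u⁻¹` of
`t_{i,j}(u + a) = δ_{i,j} + ∑_{r≥1} T^{(r)}_{i,j} (u+a)^{−r}`, i.e.
`t_{i,j}[a] = δ_{i,j} + ∑_{r≥1} T^{(r)}_{i,j} wʳ (1 + a w)^{−r}`; explicitly its
coefficient of `w^m` (for `m ≥ 1`) is `∑_{r=1}^{m} (−a)^{m−r} C(m−1, m−r) T^{(r)}_{i,j}`. -/
def tser (n : ℕ) (ℏ : ℂ) (a : ℂ) (i j : Fin n) : PowerSeries (yGL n ℏ) :=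
  PowerSeries.mk fun m =>
    if m = 0 then kd i j • (1 : yGL n ℏ)
    else ∑ r ∈ Finset.Icc 1 m,
      (((-a) ^ (m - r)) * ((m - 1).choose (m - r) : ℂ)) • T n ℏ r i j

/-- The quantum minor `t^{a_1,…,a_l}_{b_1,…,b_l}[s] = ∑_{σ,τ ∈ S_l} sgn(σ) sgn(τ)
 t_{a_{σ(1)},b_{τ(1)}}[s] t_{a_{σ(2)},b_{τ(2)}}[s+ℏ] ⋯ t_{a_{σ(l)},b_{τ(l)}}[s+(l−1)ℏ]`
in `y_ℏ(gl(n))[[w]]`. -/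
def qminor (n : ℕ) (ℏ : ℂ) (l : ℕ) (a b : Fin l → Fin n) (s : ℂ) :
    PowerSeries (yGL n ℏ) :=
  ∑ σ : Equiv.Perm (Fin l), ∑ τ : Equiv.Perm (Fin l),
    ((Equiv.Perm.sign σ : ℤ) * (Equiv.Perm.sign τ : ℤ)) •
      (List.ofFn fun k : Fin l =>
        tser n ℏ (s + (k.val : ℂ) * ℏ) (a (σ k)) (b (τ k))).prod

section Aux

variable {n : ℕ} {ℏ : ℂ}

lemma kd_symm (i j : Fin n) : kd i j = kd j i := by
  simp [kd, eq_comm]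

lemma kd_self (i : Fin n) : kd i i = 1 := by simp [kd]

lemma kd_of_ne {i j : Fin n} (h : i ≠ j) : kd i j = 0 := by simp [kd, h]

lemma comm1 (r : ℕ) (i j k l : Fin n) :
    ⁅T n ℏ 1 i j, T n ℏ r k l⁆ = kd j k • T n ℏ r i l - kd i l • T n ℏ r k j := by
  have h := RingQuot.mkAlgHom_rel ℂ (glRel.R1 (n := n) (ℏ := ℏ) r i j k l)
  simpa [T, Ring.lie_def, map_sub, map_mul, map_smul] using h

lemma comm3 (r : ℕ) (i k l : Fin n) :
    ⁅T n ℏ 2 i i, T n ℏ r k l⁆ =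
      kd i k • T n ℏ (r + 1) i l - kd i l • T n ℏ (r + 1) k i
        - ℏ • (T n ℏ 1 k i * T n ℏ r i l - T n ℏ r k i * T n ℏ 1 i l) := by
  have h := RingQuot.mkAlgHom_rel ℂ (glRel.R3 (n := n) (ℏ := ℏ) r i k l)
  simpa [T, Ring.lie_def, map_sub, map_mul, map_smul] using h

lemma lie_sum' {ι : Type*} {A : Type*} [Ring A] (s : Finset ι) (f : ι → A) (x : A) :
    ⁅∑ u ∈ s, f u, x⁆ = ∑ u ∈ s, ⁅f u, x⁆ := by
  simp [Ring.lie_def, Finset.sum_mul, Finset.mul_sum, Finset.sum_sub_distrib]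

lemma mul_lie' {A : Type*} [Ring A] (p q x : A) :
    ⁅p * q, x⁆ = p * ⁅q, x⁆ + ⁅p, x⁆ * q := by
  simp only [Ring.lie_def]
  noncomm_ring

lemma final_assembly {A : Type*} [Ring A] [Algebra ℂ A]
    (t2a t2b q1 q2 sa sb p1 p2 X Ca Cb : A) (c d f : ℂ)
    (h2 : ⁅sa, X⁆ = Ca) (h2' : ⁅sb, X⁆ = Cb)
    (h3 : ⁅q1, X⁆ = 0) (h3' : ⁅q2, X⁆ = 0)
    (h4 : ⁅p1, X⁆ = 0) (h4' : ⁅p2, X⁆ = 0)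
    (hA : ⁅t2a, X⁆ = -(d • Ca)) (hB : ⁅t2b, X⁆ = -(d • Cb)) :
    ⁅t2a - t2b - c • (q1 - q2) + d • sa - d • sb + f • (p1 - p2), X⁆ = 0 := by
  have hsl : ∀ (t : ℂ) (x y : A), ⁅t • x, y⁆ = t • ⁅x, y⁆ := by
    intro t x y
    simp [Ring.lie_def, smul_sub, smul_mul_assoc, mul_smul_comm]
  have hadd : ∀ (x y z : A), ⁅x + y, z⁆ = ⁅x, z⁆ + ⁅y, z⁆ := by
    intro x y z
    simp only [Ring.lie_def]
    noncomm_ring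
  have hsub : ∀ (x y z : A), ⁅x - y, z⁆ = ⁅x, z⁆ - ⁅y, z⁆ := by
    intro x y z
    simp only [Ring.lie_def]
    noncomm_ring
  simp only [hadd, hsub, hsl]
  rw [h2, h2', h3, h3', h4, h4', hA, hB]
  simp only [sub_self, smul_zero, sub_zero, add_zero]
  abel

lemma aux_step {A : Type*} [Ring A] [Algebra ℂ A] (p q s : A) (c d : ℂ) :
    p * -(c • q) + d • s = d • s - c • (p * q) := by
  rw [mul_neg, mul_smul_comm, neg_add_eq_sub]

lemma smul_lie'' {A : Type*} [Ring A] [Algebra ℂ A] (t : ℂ) (x y : A) :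
    ⁅t • x, y⁆ = t • ⁅x, y⁆ := by
  simp [Ring.lie_def, smul_sub, smul_mul_assoc, mul_smul_comm]

/-- The sum over `u : Fin m` of `kd u l • g u` picks out `u = l`. -/
lemma sum_kd_smul {m : ℕ} (hm : m ≤ n) (g : Fin n → yGL n ℏ) (l : Fin n)
    (hl : l.val < m) :
    ∑ u : Fin m, kd (⟨u.val, lt_of_lt_of_le u.isLt hm⟩ : Fin n) l •
        g ⟨u.val, lt_of_lt_of_le u.isLt hm⟩ = g l := by
  rw [Finset.sum_eq_single_of_mem (⟨l.val, hl⟩ : Fin m) (Finset.mem_univ _)]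
  · have : (⟨l.val, lt_of_lt_of_le hl hm⟩ : Fin n) = l := by
      apply Fin.ext; rfl
    rw [this, kd_self, one_smul]
  · intro u _ hu
    have hne : (⟨u.val, lt_of_lt_of_le u.isLt hm⟩ : Fin n) ≠ l := by
      intro hcon
      apply hu
      apply Fin.ext
      have := congrArg Fin.val hcon
      simpa using this
    rw [kd_of_ne hne, zero_smul]

/-- `ℋ_a` commutes with every generator `T^{(r)}_{k,l}` with `k, l < a`. -/
lemma HH_comm_T (a : ℕ) (h : a + 1 < n) (r : ℕ) (k l : Fin n)
    (hk : k.val < a) (hl : l.val < a) :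
    ⁅HH n ℏ a h, T n ℏ r k l⁆ = 0 := by
  set α : Fin n := ⟨a, by omega⟩ with hα
  set β : Fin n := ⟨a + 1, h⟩ with hβ
  set X : yGL n ℏ := T n ℏ r k l with hX
  have kdαk : kd α k = 0 := kd_of_ne (by intro hc; have := congrArg Fin.val hc; simp [hα] at this; omega)
  have kdαl : kd α l = 0 := kd_of_ne (by intro hc; have := congrArg Fin.val hc; simp [hα] at this; omega)
  have kdβk : kd β k = 0 := kd_of_ne (by intro hc; have := congrArg Fin.val hc; simp [hβ] at this; omega)
  have kdβl : kd β l = 0 := kd_of_ne (by intro hc; have := congrArg Fin.val hc; simp [hβ] at this; omega)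
  -- brackets of the T² terms
  have e1 : ⁅T n ℏ 2 α α, X⁆ = -(ℏ • (T n ℏ 1 k α * T n ℏ r α l - T n ℏ r k α * T n ℏ 1 α l)) := by
    rw [hX, comm3, kdαk, kdαl]; simp
  have e1' : ⁅T n ℏ 2 β β, X⁆ = -(ℏ • (T n ℏ 1 k β * T n ℏ r β l - T n ℏ r k β * T n ℏ 1 β l)) := by
    rw [hX, comm3, kdβk, kdβl]; simp
  -- brackets of the T¹ diagonal terms
  have e3 : ⁅T n ℏ 1 α α, X⁆ = 0 := by
    rw [hX, comm1, kdαk, kdαl]; simp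
  have e3' : ⁅T n ℏ 1 β β, X⁆ = 0 := by
    rw [hX, comm1, kdβk, kdβl]; simp
  have e4 : ⁅T n ℏ 1 α α ^ 2, X⁆ = 0 := by
    rw [sq, mul_lie', e3]; simp
  have e4' : ⁅T n ℏ 1 β β ^ 2, X⁆ = 0 := by
    rw [sq, mul_lie', e3']; simp
  -- brackets of the quadratic sums
  have e2 : ⁅∑ u : Fin a, T n ℏ 1 α ⟨u.val, by have := u.isLt; omega⟩ *
        T n ℏ 1 ⟨u.val, by have := u.isLt; omega⟩ α, X⁆ =
      T n ℏ r α l * T n ℏ 1 k α - T n ℏ 1 α l * T n ℏ r k α := by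
    rw [lie_sum']
    have step : ∀ u : Fin a,
        ⁅T n ℏ 1 α ⟨u.val, by have := u.isLt; omega⟩ *
          T n ℏ 1 ⟨u.val, by have := u.isLt; omega⟩ α, X⁆ =
        kd (⟨u.val, by have := u.isLt; omega⟩ : Fin n) k •
            (T n ℏ r α l * T n ℏ 1 ⟨u.val, by have := u.isLt; omega⟩ α)
          - kd (⟨u.val, by have := u.isLt; omega⟩ : Fin n) l •
            (T n ℏ 1 α ⟨u.val, by have := u.isLt; omega⟩ * T n ℏ r k α) := by
      intro u
      rw [mul_lie', hX, comm1, comm1, kdαk, kdαl]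
      simp only [zero_smul, zero_sub, sub_zero, smul_mul_assoc]
      exact aux_step _ _ _ _ _
    rw [Finset.sum_congr rfl (fun u _ => step u), Finset.sum_sub_distrib]
    rw [sum_kd_smul (by omega) (fun v => T n ℏ r α l * T n ℏ 1 v α) k hk,
        sum_kd_smul (by omega) (fun v => T n ℏ 1 α v * T n ℏ r k α) l hl]
  have e2' : ⁅∑ u : Fin (a + 1), T n ℏ 1 β ⟨u.val, by have := u.isLt; omega⟩ *
        T n ℏ 1 ⟨u.val, by have := u.isLt; omega⟩ β, X⁆ =
      T n ℏ r β l * T n ℏ 1 k β - T n ℏ 1 β l * T n ℏ r k β := by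
    rw [lie_sum']
    have step : ∀ u : Fin (a + 1),
        ⁅T n ℏ 1 β ⟨u.val, by have := u.isLt; omega⟩ *
          T n ℏ 1 ⟨u.val, by have := u.isLt; omega⟩ β, X⁆ =
        kd (⟨u.val, by have := u.isLt; omega⟩ : Fin n) k •
            (T n ℏ r β l * T n ℏ 1 ⟨u.val, by have := u.isLt; omega⟩ β)
          - kd (⟨u.val, by have := u.isLt; omega⟩ : Fin n) l •
            (T n ℏ 1 β ⟨u.val, by have := u.isLt; omega⟩ * T n ℏ r k β) := by
      intro u
      rw [mul_lie', hX, comm1, comm1, kdβk, kdβl]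
      simp only [zero_smul, zero_sub, sub_zero, smul_mul_assoc]
      exact aux_step _ _ _ _ _
    rw [Finset.sum_congr rfl (fun u _ => step u), Finset.sum_sub_distrib]
    rw [sum_kd_smul (by omega) (fun v => T n ℏ r β l * T n ℏ 1 v β) k (by omega),
        sum_kd_smul (by omega) (fun v => T n ℏ 1 β v * T n ℏ r k β) l (by omega)]
  -- the two cancellation identities
  have hcanc : ⁅T n ℏ 1 k α, T n ℏ r α l⁆ + ⁅T n ℏ 1 α l, T n ℏ r k α⁆ = 0 := by
    rw [comm1, comm1, kd_self, kd_symm l k]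
    abel
  have hcanc' : ⁅T n ℏ 1 k β, T n ℏ r β l⁆ + ⁅T n ℏ 1 β l, T n ℏ r k β⁆ = 0 := by
    rw [comm1, comm1, kd_self, kd_symm l k]
    abel
  have main : ⁅T n ℏ 2 α α, X⁆ + ℏ • (T n ℏ r α l * T n ℏ 1 k α - T n ℏ 1 α l * T n ℏ r k α) = 0 := by
    rw [e1]
    have : -(ℏ • (T n ℏ 1 k α * T n ℏ r α l - T n ℏ r k α * T n ℏ 1 α l))
        + ℏ • (T n ℏ r α l * T n ℏ 1 k α - T n ℏ 1 α l * T n ℏ r k α)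
        = -(ℏ • (⁅T n ℏ 1 k α, T n ℏ r α l⁆ + ⁅T n ℏ 1 α l, T n ℏ r k α⁆)) := by
      simp only [Ring.lie_def, smul_sub, smul_add]
      abel
    rw [this, hcanc, smul_zero, neg_zero]
  have main' : ⁅T n ℏ 2 β β, X⁆ + ℏ • (T n ℏ r β l * T n ℏ 1 k β - T n ℏ 1 β l * T n ℏ r k β) = 0 := by
    rw [e1']
    have : -(ℏ • (T n ℏ 1 k β * T n ℏ r β l - T n ℏ r k β * T n ℏ 1 β l))
        + ℏ • (T n ℏ r β l * T n ℏ 1 k β - T n ℏ 1 β l * T n ℏ r k β)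
        = -(ℏ • (⁅T n ℏ 1 k β, T n ℏ r β l⁆ + ⁅T n ℏ 1 β l, T n ℏ r k β⁆)) := by
      simp only [Ring.lie_def, smul_sub, smul_add]
      abel
    rw [this, hcanc', smul_zero, neg_zero]
  -- assemble
  have mA := eq_neg_of_add_eq_zero_left main
  have mB := eq_neg_of_add_eq_zero_left main'
  have hHH : HH n ℏ a h =
      T n ℏ 2 α α - T n ℏ 2 β β
        - (((a : ℂ) / 2) * ℏ) • (T n ℏ 1 α α - T n ℏ 1 β β)
        + ℏ • (∑ u : Fin a, T n ℏ 1 α ⟨u.val, by have := u.isLt; omega⟩ *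
            T n ℏ 1 ⟨u.val, by have := u.isLt; omega⟩ α)
        - ℏ • (∑ u : Fin (a + 1), T n ℏ 1 β ⟨u.val, by have := u.isLt; omega⟩ *
            T n ℏ 1 ⟨u.val, by have := u.isLt; omega⟩ β)
        + (ℏ / 2) • (T n ℏ 1 α α ^ 2 - T n ℏ 1 β β ^ 2) := rfl
  rw [hHH]
  exact final_assembly _ _ _ _ _ _ _ _ X _ _ _ _ _ e2 e2' e3 e3' e4 e4' mA mB

end Aux


section Aux2

variable {n : ℕ} {ℏ : ℂ}

lemma HH_comm_tser (a : ℕ) (h : a + 1 < n) (s : ℂ) (k l : Fin n)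
    (hk : k.val < a) (hl : l.val < a) :
    Commute ((PowerSeries.C : yGL n ℏ →+* PowerSeries (yGL n ℏ)) (HH n ℏ a h)) (tser n ℏ s k l) := by
  have hc : ∀ m, Commute (HH n ℏ a h) (PowerSeries.coeff m (tser n ℏ s k l)) := by
    intro m
    rw [tser, PowerSeries.coeff_mk]
    split
    · exact (Commute.one_right _).smul_right _
    · exact Commute.sum_right _ _ _ fun r _ =>
        (commute_iff_lie_eq.mpr (HH_comm_T a h r k l hk hl)).smul_right _
  show _ = _
  refine PowerSeries.ext fun m => ?_
  rw [PowerSeries.coeff_C_mul, PowerSeries.coeff_mul_C]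
  exact hc m

end Aux2


/-- for `1 ≤ i ≤ n−2`, the element `ℋ_{i+1}` of `y_ℏ(gl(n))` commutes with
the quantum minor `t^{1,…,i}_{1,…,i}[(i−1)ℏ/2]` in `y_ℏ(gl(n))[[w]]`.
(The paper's 1-based row/column indices `1,…,i` correspond to the 0-based `0,…,i−1`,
and `ℋ_{i+1}` corresponds to the 0-based index `i`.) -/
theorem HH_comm_qminor (n : ℕ) (hn : 3 ≤ n) (ℏ : ℂ) (i : ℕ) (h1 : 1 ≤ i)
    (h2 : i ≤ n - 2) :
    ⁅(PowerSeries.C : yGL n ℏ →+* PowerSeries (yGL n ℏ)) (HH n ℏ i (by omega)),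
      qminor n ℏ i (fun k => ⟨k.val, by have := k.isLt; omega⟩)
        (fun k => ⟨k.val, by have := k.isLt; omega⟩) (((i : ℂ) - 1) * ℏ / 2)⁆ = 0 := by
  rw [← commute_iff_lie_eq]
  rw [qminor]
  refine Commute.sum_right _ _ _ fun σ _ => ?_
  refine Commute.sum_right _ _ _ fun τ _ => ?_
  refine Commute.smul_right (Commute.list_prod_right _ _ fun x hx => ?_) _
  rw [List.mem_ofFn] at hx
  obtain ⟨j, rfl⟩ := hx
  exact HH_comm_tser i (by omega) _ _ _ (by simpa using (σ j).isLt) (by simpa using (τ j).isLt)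


end
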